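/- Let A ∈ C^{[m,n]} with n ≥ 2 and S a nonempty proper subset of N. Every eigenvalue λ of A lies in Ω^S(A) = (⋃_{i∈S, j∈S̄} Ω^S_{i,j}(A)) ∪ (⋃_{i∈S̄, j∈S} Ω^{S̄}_{i,j}(A)), where Ω^S_{i,j}(A) = {z ∈ ℂ : |z - a_{i…i}| (|z - a_{j…j}| - r_j^{Δ^S̄-part}(A)) ≤ r_i(A) r_j^{Δ^S}(A)}, with r_j^{Δ^S}(A) = Σ_{(i₂,…,i_m)∈Δ^S, not all equal to j} |a_{j i₂…i_m}| and r_j^{Δ^S-complement}(A) = Σ_{(i₂,…,i_m)∉Δ^S} |a_{j i₂…i_m}|. -/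

import Mathlib

/-!
Take an eigenvector `x` and an index `q` where `‖x q‖` is maximal; say `q ∉ S` (otherwise swap
`S` and `Sᶜ`), and let `p` maximize `‖x‖` on `S`. The eigen-equation at `p` gives
`‖λ - a_p‖ ‖x p‖^k ≤ r_p ‖x q‖^k`. At `q`, split the off-diagonal sum into the tuples of `Δ^S`,
whose factors are all at most `‖x p‖`, and the others:
`(‖λ - a_q‖ - r_q^{Δ^S-complement}) ‖x q‖^k ≤ r_q^{Δ^S} ‖x p‖^k`. Multiplying the two and
cancelling `‖x p‖^k ‖x q‖^k` (or noting that the left-hand side is `≤ 0`) puts `λ` in `Ω^S_{p,q}`.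
-/

open Finset

/-- off-diagonal row sum r_i(A) for a complex tensor of order k+1, dimension n -/
noncomputable def rT {n k : ℕ} (A : (Fin (k+1) → Fin n) → ℂ) (i : Fin n) : ℝ :=
  ∑ α ∈ Finset.univ.filter (fun α : Fin k → Fin n => α ≠ fun _ => i),
    ‖A (Fin.cons i α)‖

/-- r_i^j(A) = r_i(A) - |a_{ij...j}| -/
noncomputable def rTj {n k : ℕ} (A : (Fin (k+1) → Fin n) → ℂ) (i j : Fin n) : ℝ :=
  rT A i - ‖A (Fin.cons i fun _ => j)‖

/-- r_j^{Δ^S}(A): sum over index tuples all lying in S, excluding the diagonal tuple -/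
noncomputable def rDelta {n k : ℕ} (A : (Fin (k+1) → Fin n) → ℂ) (S : Finset (Fin n))
    (j : Fin n) : ℝ :=
  ∑ α ∈ Finset.univ.filter (fun α : Fin k → Fin n => (∀ l, α l ∈ S) ∧ α ≠ fun _ => j),
    ‖A (Fin.cons j α)‖

/-- r_j^{Δ^S-complement}(A): sum over index tuples not all lying in S -/
noncomputable def rDeltaC {n k : ℕ} (A : (Fin (k+1) → Fin n) → ℂ) (S : Finset (Fin n))
    (j : Fin n) : ℝ :=
  ∑ α ∈ Finset.univ.filter (fun α : Fin k → Fin n => ¬ (∀ l, α l ∈ S)),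
    ‖A (Fin.cons j α)‖

/-- λ is an eigenvalue of the tensor A: A x^{m-1} = λ x^{[m-1]} for some nonzero x -/
def IsEig {n k : ℕ} (A : (Fin (k+1) → Fin n) → ℂ) (lam : ℂ) : Prop :=
  ∃ x : Fin n → ℂ, x ≠ 0 ∧ ∀ i,
    (∑ α : Fin k → Fin n, A (Fin.cons i α) * ∏ l, x (α l)) = lam * (x i) ^ k

lemma Fin.cons_const {α : Type*} {k : ℕ} (a : α) :
    (Fin.cons a (fun _ => a) : Fin (k + 1) → α) = fun _ => a :=
  Fin.cons_self_tail (fun _ : Fin (k + 1) => a)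

lemma norm_prod_le_pow {ι R : Type*} [Fintype ι] [NormedCommRing R] [NormOneClass R]
    (f : ι → R) {B : ℝ} (hf : ∀ i, ‖f i‖ ≤ B) :
    ‖∏ i, f i‖ ≤ B ^ Fintype.card ι := by
  rw [← Finset.card_univ, ← Finset.prod_const]
  exact (Finset.univ.norm_prod_le f).trans
    (Finset.prod_le_prod (fun i _ => norm_nonneg _) (fun i _ => hf i))

lemma mul_le_mul_of_cross_le {a e r d m M : ℝ} (ha : 0 ≤ a) (hr : 0 ≤ r) (hd : 0 ≤ d)
    (hM : 0 < M) (h₁ : a * m ≤ r * M) (h₂ : e * M ≤ d * m) :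
    a * e ≤ r * d := by
  rcases le_or_gt e 0 with he | he
  · nlinarith [mul_nonneg hr hd]
  have hm : 0 < m := by
    by_contra! hm'
    nlinarith [mul_pos he hM]
  have : a * e * (m * M) ≤ r * d * (m * M) := by
    nlinarith [mul_le_mul h₁ h₂ (mul_pos he hM).le (mul_nonneg hr hM.le)]
  exact le_of_mul_le_mul_right this (mul_pos hm hM)

section Eigenvector

variable {n k : ℕ} (A : (Fin (k+1) → Fin n) → ℂ) {lam : ℂ} {x : Fin n → ℂ}

lemma norm_sum_mul_prod_le (i : Fin n) (s : Finset (Fin k → Fin n)) {B : ℝ}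
    (hB : ∀ α ∈ s, ∀ l, ‖x (α l)‖ ≤ B) :
    ‖∑ α ∈ s, A (Fin.cons i α) * ∏ l, x (α l)‖ ≤ (∑ α ∈ s, ‖A (Fin.cons i α)‖) * B ^ k := by
  rw [Finset.sum_mul]
  refine (norm_sum_le _ _).trans (Finset.sum_le_sum fun α hα => ?_)
  rw [norm_mul]
  gcongr
  simpa using norm_prod_le_pow (fun l => x (α l)) (hB α hα)

lemma sum_offDiag_eq_of_eigen {i : Fin n}
    (hi : ∑ α : Fin k → Fin n, A (Fin.cons i α) * ∏ l, x (α l) = lam * x i ^ k) :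
    ∑ α ∈ Finset.univ.filter (fun α : Fin k → Fin n => α ≠ fun _ => i),
      A (Fin.cons i α) * ∏ l, x (α l) = (lam - A (fun _ => i)) * x i ^ k := by
  rw [← Finset.sum_filter_add_sum_filter_not Finset.univ (fun α => α = fun _ => i),
    Finset.filter_eq' Finset.univ, if_pos (Finset.mem_univ _), Finset.sum_singleton,
    Fin.cons_const, Finset.prod_const, Finset.card_univ, Fintype.card_fin] at hi
  linear_combination hi

lemma norm_sub_diag_mul_le_rT {i : Fin n}
    (hi : ∑ α : Fin k → Fin n, A (Fin.cons i α) * ∏ l, x (α l) = lam * x i ^ k)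
    {M : ℝ} (hM : ∀ j, ‖x j‖ ≤ M) :
    ‖lam - A (fun _ => i)‖ * ‖x i‖ ^ k ≤ rT A i * M ^ k := by
  rw [← norm_pow, ← norm_mul, ← sum_offDiag_eq_of_eigen A hi]
  exact norm_sum_mul_prod_le A i _ fun _ _ _ => hM _

lemma norm_sub_diag_mul_le_rDelta (T : Finset (Fin n)) {q : Fin n}
    (hq : ∑ α : Fin k → Fin n, A (Fin.cons q α) * ∏ l, x (α l) = lam * x q ^ k)
    {m M : ℝ} (hm : ∀ j ∈ T, ‖x j‖ ≤ m) (hM : ∀ j, ‖x j‖ ≤ M) :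
    ‖lam - A (fun _ => q)‖ * ‖x q‖ ^ k ≤ rDelta A T q * m ^ k + rDeltaC A T q * M ^ k := by
  rw [← norm_pow, ← norm_mul, ← sum_offDiag_eq_of_eigen A hq,
    ← Finset.sum_filter_add_sum_filter_not _ (fun α : Fin k → Fin n => ∀ l, α l ∈ T),
    Finset.filter_filter, Finset.filter_filter]
  refine (norm_add_le _ _).trans (add_le_add ?_ ?_)
  · refine (norm_sum_mul_prod_le A q _ fun α hα l => hm _ ((Finset.mem_filter.1 hα).2.2 l)).trans
      (le_of_eq ?_)
    simp only [rDelta, and_comm]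
  · refine (norm_sum_mul_prod_le A q _ fun _ _ _ => hM _).trans ?_
    refine mul_le_mul_of_nonneg_right (Finset.sum_le_sum_of_subset_of_nonneg ?_ ?_)
      (pow_nonneg ((norm_nonneg _).trans (hM q)) k)
    · exact Finset.monotone_filter_right _ fun _ _ h => h.2
    · exact fun _ _ _ => norm_nonneg _

lemma exists_mem_brauer_le_of_eigenvector (hx : x ≠ 0)
    (heig : ∀ i, ∑ α : Fin k → Fin n, A (Fin.cons i α) * ∏ l, x (α l) = lam * x i ^ k)
    {T : Finset (Fin n)} (hT : T.Nonempty) {q : Fin n} (hq : ∀ j, ‖x j‖ ≤ ‖x q‖) :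
    ∃ i ∈ T, ‖lam - A (fun _ => i)‖ * (‖lam - A (fun _ => q)‖ - rDeltaC A T q) ≤
      rT A i * rDelta A T q := by
  obtain ⟨i, hiT, hi⟩ := T.exists_max_image (fun j => ‖x j‖) hT
  have hxq : 0 < ‖x q‖ := by
    obtain ⟨j, hj⟩ := Function.ne_iff.mp hx
    exact (norm_pos_iff.2 hj).trans_le (hq j)
  refine ⟨i, hiT, mul_le_mul_of_cross_le (norm_nonneg _) ?_ ?_ (pow_pos hxq k)
    (norm_sub_diag_mul_le_rT A (heig i) hq) ?_⟩
  · exact Finset.sum_nonneg fun _ _ => norm_nonneg _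
  · exact Finset.sum_nonneg fun _ _ => norm_nonneg _
  · have := norm_sub_diag_mul_le_rDelta A T (heig q) hi hq
    linarith

end Eigenvector

theorem stmt6_general {n k : ℕ} (A : (Fin (k+1) → Fin n) → ℂ)
    (S : Finset (Fin n)) (hS : S.Nonempty) (hS' : S ≠ Finset.univ) (lam : ℂ)
    (h : IsEig A lam) :
    (∃ i ∈ S, ∃ j ∈ Sᶜ,
      ‖lam - A (fun _ => i)‖ *
          (‖lam - A (fun _ => j)‖ - rDeltaC A S j) ≤
        rT A i * rDelta A S j) ∨
    (∃ i ∈ Sᶜ, ∃ j ∈ S,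
      ‖lam - A (fun _ => i)‖ *
          (‖lam - A (fun _ => j)‖ - rDeltaC A Sᶜ j) ≤
        rT A i * rDelta A Sᶜ j) := by
  obtain ⟨x, hx, heig⟩ := h
  have : Nonempty (Fin n) := hS.to_type
  obtain ⟨q, hq⟩ := Finite.exists_max fun j => ‖x j‖
  by_cases hqS : q ∈ S
  · have hSc : Sᶜ.Nonempty :=
      nonempty_iff_ne_empty.2 (mt (compl_eq_empty_iff S).1 hS')
    obtain ⟨i, hi, hle⟩ := exists_mem_brauer_le_of_eigenvector A hx heig hSc hq
    exact Or.inr ⟨i, hi, q, hqS, hle⟩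
  · obtain ⟨i, hi, hle⟩ := exists_mem_brauer_le_of_eigenvector A hx heig hS hq
    exact Or.inl ⟨i, hi, q, Finset.mem_compl.2 hqS, hle⟩

theorem stmt6 {n k : ℕ} (hn : 2 ≤ n) (A : (Fin (k+1) → Fin n) → ℂ)
    (S : Finset (Fin n)) (hS : S.Nonempty) (hS' : S ≠ Finset.univ) (lam : ℂ)
    (h : IsEig A lam) :
    (∃ i ∈ S, ∃ j ∈ Sᶜ,
      ‖lam - A (fun _ => i)‖ *
          (‖lam - A (fun _ => j)‖ - rDeltaC A S j) ≤
        rT A i * rDelta A S j) ∨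
    (∃ i ∈ Sᶜ, ∃ j ∈ S,
      ‖lam - A (fun _ => i)‖ *
          (‖lam - A (fun _ => j)‖ - rDeltaC A Sᶜ j) ≤
        rT A i * rDelta A Sᶜ j) :=
  stmt6_general A S hS hS' lam h
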